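/- Let S be a type of states, T a transition relation on S, I and P sets of states, and F : ℕ → Set S a sequence of frames satisfying: F 0 = I; F j ⊆ F (j+1) for all j; F j ⊆ P for all j; and for all j, every T-successor of a state in F j lies in F (j+1). If F (i+1) = F i for some i, then every state reachable from I by finitely many T-steps belongs to P. -/
import Mathlib

/-- IC3 fixpoint termination: if a monotone sequence of frames `F` with
`F 0 = I`, each frame contained in `P`, and each frame's `T`-successors
contained in the next frame, satisfies `F (i+1) = F i` for some `i`, then
every state reachable from `I` by finitely many `T`-steps belongs to `P`. -/
theorem ic3_fixpoint_safety {S : Type*} (T : S → S → Prop)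
    (I P : Set S) (F : ℕ → Set S)
    (h0 : F 0 = I)
    (hmono : ∀ j, F j ⊆ F (j + 1))
    (hP : ∀ j, F j ⊆ P)
    (hsucc : ∀ j, ∀ s ∈ F j, ∀ s', T s s' → s' ∈ F (j + 1))
    (i : ℕ) (hfix : F (i + 1) = F i) :
    ∀ s₀ ∈ I, ∀ s, Relation.ReflTransGen T s₀ s → s ∈ P := by
  intro s₀ hs₀ s hreach
  have h0i : I ⊆ F i := by
    rw [← h0]
    have : ∀ n, F 0 ⊆ F n := by
      intro n
      induction n with
      | zero => exact fun _ h => h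
      | succ n ih => exact fun x hx => hmono n (ih hx)
    exact this i
  have key : s ∈ F i := by
    induction hreach with
    | refl => exact h0i hs₀
    | tail _ hstep ih => exact hfix ▸ hsucc i _ ih _ hstep
  exact hP i key
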